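/- arXiv:1804.00101 — 2 statements merged into one kernel-verified Lean document; each statement's English description precedes it below -/
import Mathlib

section
/- Let A be a finite nonempty set of points in the plane and let η > 0 be an opening cost. If 𝒞 is an optimal partition for (A, η), then the convex hulls of the clusters of 𝒞 are pairwise disjoint: for any two distinct clusters C₁, C₂ ∈ 𝒞 one has convexHull(C₁) ∩ convexHull(C₂) = ∅. -/
noncomputable section

/-- The Euclidean plane. -/
abbrev Plane := EuclideanSpace ℝ (Fin 2)

/-- Perimeter of a bounded set via Cauchy's formula. -/
noncomputable def perim (C : Set Plane) : ℝ :=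
  ∫ θ in (0:ℝ)..(2 * Real.pi),
    sSup ((fun p : Plane => p 0 * Real.cos θ + p 1 * Real.sin θ) '' C)

/-- `P` is a partition of `A` into nonempty clusters. -/
def IsPartition (A : Set Plane) (P : Finset (Set Plane)) : Prop :=
  (∀ C ∈ P, (C : Set Plane).Nonempty) ∧
  (⋃₀ (P : Set (Set Plane)) = A) ∧
  ((P : Set (Set Plane)).PairwiseDisjoint id)

/-- Cost of a partition with opening cost `η` per cluster. -/
noncomputable def cost (η : ℝ) (P : Finset (Set Plane)) : ℝ :=
  η * P.card + ∑ C ∈ P, perim C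

/-- `P` is an optimal partition for `(A, η)`. -/
def IsOptimalPartition (η : ℝ) (A : Set Plane) (P : Finset (Set Plane)) : Prop :=
  IsPartition A P ∧ ∀ Q : Finset (Set Plane), IsPartition A Q → cost η P ≤ cost η Q

/-- `A` is indivisible for `η`: the one-block partition `{A}` is optimal. -/
def Indivisible (η : ℝ) (A : Set Plane) : Prop :=
  IsOptimalPartition η A {A}

/-- A maximal optimal partition of `(A, η)`. -/
def IsMaximalOptimal (η : ℝ) (A : Set Plane) (P : Finset (Set Plane)) : Prop :=
  IsOptimalPartition η A P ∧
  ¬ ∃ Q : Finset (Set Plane), IsOptimalPartition η A Q ∧ Q.card < P.card ∧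
      ∀ C ∈ P, ∃ C' ∈ Q, C ⊆ C'

/-!
With `u_θ = (cos θ, sin θ)`, the support function `h_C(θ) = sup_{p ∈ C} ⟨p, u_θ⟩` has
`perim C = ∫₀^{2π} h_C`.
If a point `x` lies in the convex hulls of two clusters `C₁` and `C₂`, then `⟨x, u_θ⟩` is a lower
bound for both `h_{C₁}(θ)` and `h_{C₂}(θ)`, hence
`h_{C₁ ∪ C₂} = max h_{C₁} h_{C₂} ≤ h_{C₁} + h_{C₂} - ⟨x, u_θ⟩`; as `θ ↦ ⟨x, u_θ⟩` integrates to zero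
over a full turn, merging `C₁` and `C₂` does not increase the total perimeter. It saves one
opening cost `η > 0`, contradicting optimality.
-/

open Real MeasureTheory

def dirComp (θ : ℝ) (p : Plane) : ℝ := p 0 * cos θ + p 1 * sin θ

def supportFun (C : Set Plane) (θ : ℝ) : ℝ := sSup (dirComp θ '' C)

lemma isLinearMap_dirComp (θ : ℝ) : IsLinearMap ℝ (dirComp θ) := by
  constructor <;> intros <;> simp only [dirComp, PiLp.add_apply, PiLp.smul_apply, smul_eq_mul] <;>
    ring

lemma continuous_dirComp_left (p : Plane) : Continuous fun θ => dirComp θ p := by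
  unfold dirComp; fun_prop

lemma integral_dirComp (p : Plane) : ∫ θ in (0:ℝ)..(2 * π), dirComp θ p = 0 := by
  simp only [dirComp]
  rw [intervalIntegral.integral_add ((by fun_prop : Continuous _).intervalIntegrable _ _)
      ((by fun_prop : Continuous _).intervalIntegrable _ _),
    intervalIntegral.integral_const_mul, intervalIntegral.integral_const_mul, integral_cos,
    integral_sin]
  simp

lemma le_csSup_image_of_mem_convexHull {E : Type*} [AddCommGroup E] [Module ℝ E] {f : E → ℝ}
    (hf : IsLinearMap ℝ f) {C : Set E} (hC : BddAbove (f '' C)) {x : E}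
    (hx : x ∈ convexHull ℝ C) : f x ≤ sSup (f '' C) :=
  convexHull_min (fun _ hp => le_csSup hC (Set.mem_image_of_mem f hp))
    (convex_halfSpace_le hf _) hx

lemma continuous_supportFun {C : Set Plane} (hC : C.Finite) (hne : C.Nonempty) :
    Continuous (supportFun C) := by
  have hne' : hC.toFinset.Nonempty := by simpa using hne
  have : supportFun C = fun θ => hC.toFinset.sup' hne' (dirComp θ) := by
    funext θ
    rw [Finset.sup'_eq_csSup_image, hC.coe_toFinset]
    rfl
  rw [this]
  exact Continuous.finset_sup'_apply _ fun p _ => continuous_dirComp_left p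

lemma supportFun_union {C₁ C₂ : Set Plane} (h₁ : C₁.Finite) (h₂ : C₂.Finite)
    (hn₁ : C₁.Nonempty) (hn₂ : C₂.Nonempty) (θ : ℝ) :
    supportFun (C₁ ∪ C₂) θ = max (supportFun C₁ θ) (supportFun C₂ θ) := by
  rw [supportFun, Set.image_union]
  exact csSup_union (h₁.image _).bddAbove (hn₁.image _) (h₂.image _).bddAbove (hn₂.image _)

lemma perim_union_le_of_mem_convexHull {C₁ C₂ : Set Plane} (h₁ : C₁.Finite) (h₂ : C₂.Finite)
    (hn₁ : C₁.Nonempty) (hn₂ : C₂.Nonempty) {x : Plane}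
    (hx₁ : x ∈ convexHull ℝ C₁) (hx₂ : x ∈ convexHull ℝ C₂) :
    perim (C₁ ∪ C₂) ≤ perim C₁ + perim C₂ := by
  have i₁ := (continuous_supportFun h₁ hn₁).intervalIntegrable (μ := volume) 0 (2 * π)
  have i₂ := (continuous_supportFun h₂ hn₂).intervalIntegrable (μ := volume) 0 (2 * π)
  have ix := (continuous_dirComp_left x).intervalIntegrable (μ := volume) 0 (2 * π)
  have hpointwise : ∀ θ ∈ Set.Icc 0 (2 * π),
      supportFun (C₁ ∪ C₂) θ ≤ supportFun C₁ θ + supportFun C₂ θ - dirComp θ x := by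
    intro θ _
    have k₁ : dirComp θ x ≤ supportFun C₁ θ :=
      le_csSup_image_of_mem_convexHull (isLinearMap_dirComp θ) (h₁.image _).bddAbove hx₁
    have k₂ : dirComp θ x ≤ supportFun C₂ θ :=
      le_csSup_image_of_mem_convexHull (isLinearMap_dirComp θ) (h₂.image _).bddAbove hx₂
    rw [supportFun_union h₁ h₂ hn₁ hn₂]
    exact max_le (by linarith) (by linarith)
  calc perim (C₁ ∪ C₂)
      ≤ ∫ θ in (0:ℝ)..(2 * π), (supportFun C₁ θ + supportFun C₂ θ - dirComp θ x) := by
        refine intervalIntegral.integral_mono_on (by positivity)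
          ((continuous_supportFun (h₁.union h₂) hn₁.inl).intervalIntegrable _ _)
          ((i₁.add i₂).sub ix) hpointwise
    _ = perim C₁ + perim C₂ := by
        rw [intervalIntegral.integral_sub (i₁.add i₂) ix, intervalIntegral.integral_add i₁ i₂,
          integral_dirComp, sub_zero]
        rfl

def mergeClusters (P : Finset (Set Plane)) (C₁ C₂ : Set Plane) : Finset (Set Plane) :=
  insert (C₁ ∪ C₂) (P \ {C₁, C₂})

section Partition

variable {A : Set Plane} {P : Finset (Set Plane)} {C₁ C₂ : Set Plane}

lemma IsPartition.subset_of_mem (hP : IsPartition A P) {C : Set Plane} (hC : C ∈ P) : C ⊆ A :=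
  hP.2.1 ▸ Set.subset_sUnion_of_mem (Finset.mem_coe.2 hC)

lemma IsPartition.union_notMem_sdiff (hP : IsPartition A P) (h₁ : C₁ ∈ P) :
    C₁ ∪ C₂ ∉ P \ {C₁, C₂} := by
  intro hmem
  obtain ⟨hP', hne⟩ := Finset.mem_sdiff.1 hmem
  have hne₁ : C₁ ∪ C₂ ≠ C₁ := fun h => hne (by simp [h])
  have hdisj : Disjoint (C₁ ∪ C₂) C₁ := hP.2.2 hP' h₁ hne₁
  exact (hP.1 C₁ h₁).ne_empty (disjoint_self.1 (hdisj.mono_left Set.subset_union_left))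

lemma sUnion_mergeClusters (h₁ : C₁ ∈ P) (h₂ : C₂ ∈ P) :
    ⋃₀ (mergeClusters P C₁ C₂ : Set (Set Plane)) = ⋃₀ (P : Set (Set Plane)) := by
  ext y
  simp only [mergeClusters, Finset.coe_insert, Finset.coe_sdiff, Finset.coe_singleton,
    Set.sUnion_insert, Set.mem_union, Set.mem_sUnion, Set.mem_sdiff, SetLike.mem_coe,
    Set.mem_insert_iff, Set.mem_singleton_iff, not_or]
  constructor
  · rintro ((hy | hy) | ⟨C, ⟨hC, -⟩, hy⟩)
    exacts [⟨C₁, h₁, hy⟩, ⟨C₂, h₂, hy⟩, ⟨C, hC, hy⟩]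
  · rintro ⟨C, hC, hy⟩
    by_cases hC₁ : C = C₁
    · exact .inl (.inl (hC₁ ▸ hy))
    by_cases hC₂ : C = C₂
    · exact .inl (.inr (hC₂ ▸ hy))
    exact .inr ⟨C, ⟨hC, hC₁, hC₂⟩, hy⟩

lemma IsPartition.mergeClusters (hP : IsPartition A P) (h₁ : C₁ ∈ P) (h₂ : C₂ ∈ P) :
    IsPartition A (mergeClusters P C₁ C₂) := by
  obtain ⟨hne, hunion, hdisj⟩ := hP
  refine ⟨?_, hunion ▸ sUnion_mergeClusters h₁ h₂, ?_⟩
  · intro C hC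
    rcases Finset.mem_insert.1 hC with rfl | hC
    · exact (hne C₁ h₁).inl
    · exact hne C (Finset.mem_sdiff.1 hC).1
  · rw [_root_.mergeClusters, Finset.coe_insert]
    refine (hdisj.subset (by simp)).insert fun C hC hCne => ?_
    simp only [Finset.coe_sdiff, Finset.coe_pair, Set.mem_sdiff, Finset.mem_coe,
      Set.mem_insert_iff, Set.mem_singleton_iff, not_or] at hC
    exact Set.disjoint_union_left.2
      ⟨hdisj h₁ hC.1 (Ne.symm hC.2.1), hdisj h₂ hC.1 (Ne.symm hC.2.2)⟩

lemma cost_mergeClusters (hP : IsPartition A P) (η : ℝ) (h₁ : C₁ ∈ P) (h₂ : C₂ ∈ P)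
    (hne : C₁ ≠ C₂) :
    cost η (mergeClusters P C₁ C₂) + η + perim C₁ + perim C₂ = cost η P + perim (C₁ ∪ C₂) := by
  have hsub : {C₁, C₂} ⊆ P := Finset.insert_subset h₁ (Finset.singleton_subset_iff.2 h₂)
  have hcard : ((P \ {C₁, C₂}).card : ℝ) + 2 = P.card := by
    rw [Finset.card_sdiff_of_subset hsub, Finset.card_pair hne]
    have : 2 ≤ P.card := Finset.card_pair hne ▸ Finset.card_le_card hsub
    push_cast [this]
    ring
  have hsum := Finset.sum_sdiff hsub (f := perim)
  rw [Finset.sum_pair hne] at hsum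
  simp only [cost, mergeClusters, Finset.card_insert_of_notMem (hP.union_notMem_sdiff h₁),
    Finset.sum_insert (hP.union_notMem_sdiff h₁), ← hsum, ← hcard]
  push_cast
  ring

end Partition

theorem optimal_partition_disjoint_hulls_general
    (A : Set Plane) (hA : A.Finite) (η : ℝ) (hη : 0 < η)
    (P : Finset (Set Plane)) (hP : IsOptimalPartition η A P) :
    ∀ C₁ ∈ P, ∀ C₂ ∈ P, C₁ ≠ C₂ →
      convexHull ℝ C₁ ∩ convexHull ℝ C₂ = ∅ := by
  intro C₁ h₁ C₂ h₂ hne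
  refine Set.eq_empty_of_forall_notMem fun x ⟨hx₁, hx₂⟩ => ?_
  obtain ⟨hpart, hopt⟩ := hP
  have hmerge_le := perim_union_le_of_mem_convexHull (hA.subset (hpart.subset_of_mem h₁))
    (hA.subset (hpart.subset_of_mem h₂)) (hpart.1 C₁ h₁) (hpart.1 C₂ h₂) hx₁ hx₂
  have hopt_le := hopt _ (hpart.mergeClusters h₁ h₂)
  have hcost := cost_mergeClusters hpart η h₁ h₂ hne
  linarith

/-- clusters of an optimal partition have pairwise disjoint convex hulls. -/
theorem optimal_partition_disjoint_hulls
    (A : Set Plane) (hA : A.Finite) (hAne : A.Nonempty) (η : ℝ) (hη : 0 < η)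
    (P : Finset (Set Plane)) (hP : IsOptimalPartition η A P) :
    ∀ C₁ ∈ P, ∀ C₂ ∈ P, C₁ ≠ C₂ →
      convexHull ℝ C₁ ∩ convexHull ℝ C₂ = ∅ :=
  optimal_partition_disjoint_hulls_general A hA η hη P hP

end
end

section
/- Let π be a non-basic convex polyomino. Then there exist two cells Γ₁, Γ₂ ∈ π with the following properties: (i) Γ₁ and Γ₂ are non-neighbouring; (ii) π \ {Γ₁} and π \ {Γ₂} are convex polyominoes; and either (iii.a) |x(Γ₁) − x(Γ₂)| ≥ |y(Γ₁) − y(Γ₂)|, the column of Γ₁ is the leftmost column of π (x(Γ₁) = min_{Γ∈π} x(Γ)) and the column of Γ₂ is the rightmost column of π (x(Γ₂) = max_{Γ∈π} x(Γ)), or (iii.b) |y(Γ₁) − y(Γ₂)| ≥ |x(Γ₁) − x(Γ₂)|, Γ₁ is in the topmost row of π (y(Γ₁) = max_{Γ∈π} y(Γ)) and Γ₂ is in the bottommost row of π (y(Γ₂) = min_{Γ∈π} y(Γ)). -/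
/-- Two cells of `ℤ × ℤ` share an edge. -/
def EdgeAdj (a b : ℤ × ℤ) : Prop :=
  |a.1 - b.1| + |a.2 - b.2| = 1

/-- Two cells of `ℤ × ℤ` are neighbouring: they share an edge or a corner. -/
def Neighbouring (a b : ℤ × ℤ) : Prop :=
  max |a.1 - b.1| |a.2 - b.2| ≤ 1

/-- A polyomino: a finite nonempty set of cells connected under edge-adjacency. -/
def IsPolyomino (π : Finset (ℤ × ℤ)) : Prop :=
  π.Nonempty ∧
  ∀ a ∈ π, ∀ b ∈ π,
    Relation.ReflTransGen (fun c d => c ∈ π ∧ d ∈ π ∧ EdgeAdj c d) a b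

/-- A convex polyomino: a polyomino whose intersection with every row and every
column is contiguous. -/
def IsConvexPolyomino (π : Finset (ℤ × ℤ)) : Prop :=
  IsPolyomino π ∧
  (∀ a ∈ π, ∀ b ∈ π, a.2 = b.2 → ∀ x : ℤ, a.1 ≤ x → x ≤ b.1 → (x, a.2) ∈ π) ∧
  (∀ a ∈ π, ∀ b ∈ π, a.1 = b.1 → ∀ y : ℤ, a.2 ≤ y → y ≤ b.2 → (a.1, y) ∈ π)

/-- A non-basic polyomino: one containing two non-neighbouring cells. -/
def NonBasic (π : Finset (ℤ × ℤ)) : Prop :=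
  ∃ a ∈ π, ∃ b ∈ π, ¬ Neighbouring a b

lemma pext {p q : ℤ × ℤ} (h1 : p.1 = q.1) (h2 : p.2 = q.2) : p = q := by
  obtain ⟨_, _⟩ := p; obtain ⟨_, _⟩ := q; simp_all

lemma edgeAdj_symm {a b : ℤ × ℤ} (h : EdgeAdj a b) : EdgeAdj b a := by
  unfold EdgeAdj at *; rw [abs_sub_comm b.1, abs_sub_comm b.2]; exact h

lemma edgeAdj_cases {a b : ℤ × ℤ} (h : EdgeAdj a b) :
    (a.1 = b.1 + 1 ∧ a.2 = b.2) ∨ (a.1 = b.1 - 1 ∧ a.2 = b.2) ∨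
    (a.1 = b.1 ∧ a.2 = b.2 + 1) ∨ (a.1 = b.1 ∧ a.2 = b.2 - 1) := by
  unfold EdgeAdj at h
  rcases abs_cases (a.1 - b.1) with ⟨h1, _⟩ | ⟨h1, _⟩ <;>
  rcases abs_cases (a.2 - b.2) with ⟨h2, _⟩ | ⟨h2, _⟩ <;> omega

lemma edge_v (x y δ : ℤ) (hδ : δ = 1 ∨ δ = -1) : EdgeAdj (x, y) (x, y + δ) := by
  rcases hδ with rfl | rfl <;> simp [EdgeAdj]

lemma edge_h (x y ε : ℤ) (hε : ε = 1 ∨ ε = -1) : EdgeAdj (x, y) (x + ε, y) := by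
  rcases hε with rfl | rfl <;> simp [EdgeAdj]

lemma erase_connected_aux (π : Finset (ℤ × ℤ)) (Γ : ℤ × ℤ)
    (hbr : ∀ c ∈ π.erase Γ, ∀ d ∈ π.erase Γ, EdgeAdj c Γ → EdgeAdj d Γ →
      Relation.ReflTransGen
        (fun c d => c ∈ π.erase Γ ∧ d ∈ π.erase Γ ∧ EdgeAdj c d) c d)
    {a b : ℤ × ℤ}
    (h : Relation.ReflTransGen (fun c d => c ∈ π ∧ d ∈ π ∧ EdgeAdj c d) a b)
    (ha : a ∈ π.erase Γ) :
    (b ∈ π.erase Γ → Relation.ReflTransGen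
        (fun c d => c ∈ π.erase Γ ∧ d ∈ π.erase Γ ∧ EdgeAdj c d) a b) ∧
    (b = Γ → ∀ d ∈ π.erase Γ, EdgeAdj Γ d → Relation.ReflTransGen
        (fun c d => c ∈ π.erase Γ ∧ d ∈ π.erase Γ ∧ EdgeAdj c d) a d) := by
  induction h with
  | refl =>
    refine ⟨fun _ => .refl, fun hb => absurd (hb ▸ ha) (Finset.notMem_erase _ _)⟩
  | @tail c b hpath hstep ih =>
    obtain ⟨hcπ, hbπ, hadj⟩ := hstep
    by_cases hcΓ : c = Γ
    · subst hcΓ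
      constructor
      · intro hbm
        exact ih.2 rfl b hbm hadj
      · intro hbΓ
        subst hbΓ
        simp [EdgeAdj] at hadj
    · have hc' : c ∈ π.erase Γ := Finset.mem_erase.mpr ⟨hcΓ, hcπ⟩
      have pac := ih.1 hc'
      constructor
      · intro hbm
        exact pac.tail ⟨hc', hbm, hadj⟩
      · intro hbΓ d hd hΓd
        exact pac.trans (hbr c hc' d hd (hbΓ ▸ hadj) (edgeAdj_symm hΓd))

lemma erase_corner (π : Finset (ℤ × ℤ)) (hconv : IsConvexPolyomino π)
    (Γ : ℤ × ℤ) (hΓ : Γ ∈ π) (ε δ : ℤ) (hε : ε = 1 ∨ ε = -1) (hδ : δ = 1 ∨ δ = -1)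
    (h1 : ∀ a ∈ π, a.2 = Γ.2 → 0 ≤ ε * (a.1 - Γ.1))
    (h2 : ∀ a ∈ π, a.1 = Γ.1 → 0 ≤ δ * (a.2 - Γ.2))
    (h3 : (Γ.1, Γ.2 + δ) ∉ π ∨ (Γ.1 + ε, Γ.2) ∉ π ∨ (Γ.1 + ε, Γ.2 + δ) ∈ π)
    (hb : ∃ b ∈ π, b ≠ Γ) :
    IsConvexPolyomino (π.erase Γ) := by
  have classify : ∀ c ∈ π, EdgeAdj c Γ →
      c = (Γ.1 + ε, Γ.2) ∨ c = (Γ.1, Γ.2 + δ) := by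
    intro c hc hadj
    rcases edgeAdj_cases hadj with h4 | h4 | h4 | h4
    · have := h1 c hc h4.2
      exact Or.inl (pext (by rcases hε with rfl | rfl <;> omega) h4.2)
    · have := h1 c hc h4.2
      exact Or.inl (pext (by rcases hε with rfl | rfl <;> omega) h4.2)
    · have := h2 c hc h4.1
      exact Or.inr (pext h4.1 (by rcases hδ with rfl | rfl <;> omega))
    · have := h2 c hc h4.1
      exact Or.inr (pext h4.1 (by rcases hδ with rfl | rfl <;> omega))
  have hRne : (Γ.1 + ε, Γ.2) ≠ Γ := by
    intro h; have := congrArg Prod.fst h; simp at this; rcases hε with rfl | rfl <;> omega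
  have hBne : (Γ.1, Γ.2 + δ) ≠ Γ := by
    intro h; have := congrArg Prod.snd h; simp at this; rcases hδ with rfl | rfl <;> omega
  have hbr : ∀ c ∈ π.erase Γ, ∀ d ∈ π.erase Γ, EdgeAdj c Γ → EdgeAdj d Γ →
      Relation.ReflTransGen
        (fun c d => c ∈ π.erase Γ ∧ d ∈ π.erase Γ ∧ EdgeAdj c d) c d := by
    intro c hc d hd hcΓ hdΓ
    have hcπ := Finset.mem_of_mem_erase hc
    have hdπ := Finset.mem_of_mem_erase hd
    rcases classify c hcπ hcΓ with rfl | rfl <;> rcases classify d hdπ hdΓ with rfl | rfl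
    · exact .refl
    · have hD : (Γ.1 + ε, Γ.2 + δ) ∈ π := by
        rcases h3 with h | h | h
        · exact absurd hdπ h
        · exact absurd hcπ h
        · exact h
      have hD' : (Γ.1 + ε, Γ.2 + δ) ∈ π.erase Γ := Finset.mem_erase.mpr
        ⟨by intro h; have := congrArg Prod.fst h; simp at this
            rcases hε with rfl | rfl <;> omega, hD⟩
      refine Relation.ReflTransGen.head ⟨hc, hD', edge_v _ _ _ hδ⟩
        (Relation.ReflTransGen.single ⟨hD', hd, ?_⟩)
      have := edge_h Γ.1 (Γ.2 + δ) ε hε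
      exact edgeAdj_symm this
    · have hD : (Γ.1 + ε, Γ.2 + δ) ∈ π := by
        rcases h3 with h | h | h
        · exact absurd hcπ h
        · exact absurd hdπ h
        · exact h
      have hD' : (Γ.1 + ε, Γ.2 + δ) ∈ π.erase Γ := Finset.mem_erase.mpr
        ⟨by intro h; have := congrArg Prod.fst h; simp at this
            rcases hε with rfl | rfl <;> omega, hD⟩
      refine Relation.ReflTransGen.head ⟨hc, hD', edge_h _ _ _ hε⟩
        (Relation.ReflTransGen.single ⟨hD', hd, edgeAdj_symm (edge_v _ _ _ hδ)⟩)
    · exact .refl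
  obtain ⟨b0, hb0π, hb0ne⟩ := hb
  refine ⟨⟨⟨b0, Finset.mem_erase.mpr ⟨hb0ne, hb0π⟩⟩, ?_⟩, ?_, ?_⟩
  · intro a ha b hbm
    exact (erase_connected_aux π Γ hbr
      (hconv.1.2 a (Finset.mem_of_mem_erase ha) b (Finset.mem_of_mem_erase hbm)) ha).1 hbm
  · intro a ha b hbm hy x hax hxb
    have hmem := hconv.2.1 a (Finset.mem_of_mem_erase ha) b (Finset.mem_of_mem_erase hbm) hy x hax hxb
    refine Finset.mem_erase.mpr ⟨?_, hmem⟩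
    intro heq
    have hx : x = Γ.1 := congrArg Prod.fst heq
    have hy2 : a.2 = Γ.2 := by simpa using congrArg Prod.snd heq
    have hb2 : b.2 = Γ.2 := by omega
    have ha1 := h1 a (Finset.mem_of_mem_erase ha) hy2
    have hb1 := h1 b (Finset.mem_of_mem_erase hbm) hb2
    have hane : a ≠ Γ := (Finset.mem_erase.mp ha).1
    have hbne2 : b ≠ Γ := (Finset.mem_erase.mp hbm).1
    rcases hε with rfl | rfl
    · exact hane (pext (by omega) hy2)
    · exact hbne2 (pext (by omega) hb2)
  · intro a ha b hbm hx y hay hyb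
    have hmem := hconv.2.2 a (Finset.mem_of_mem_erase ha) b (Finset.mem_of_mem_erase hbm) hx y hay hyb
    refine Finset.mem_erase.mpr ⟨?_, hmem⟩
    intro heq
    have hy : y = Γ.2 := congrArg Prod.snd heq
    have hx2 : a.1 = Γ.1 := by simpa using congrArg Prod.fst heq
    have hb2 : b.1 = Γ.1 := by omega
    have ha1 := h2 a (Finset.mem_of_mem_erase ha) hx2
    have hb1 := h2 b (Finset.mem_of_mem_erase hbm) hb2
    have hane : a ≠ Γ := (Finset.mem_erase.mp ha).1
    have hbne2 : b ≠ Γ := (Finset.mem_erase.mp hbm).1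
    rcases hδ with rfl | rfl
    · exact hane (pext hx2 (by omega))
    · exact hbne2 (pext hb2 (by omega))
lemma pick_col (π : Finset (ℤ × ℤ)) (hconv : IsConvexPolyomino π)
    (ε : ℤ) (hε : ε = 1 ∨ ε = -1) (x0 : ℤ)
    (hmem : ∃ a ∈ π, a.1 = x0)
    (hext : ∀ a ∈ π, 0 ≤ ε * (a.1 - x0))
    (hb : ∃ b ∈ π, b.1 ≠ x0) :
    ∃ Γ ∈ π, Γ.1 = x0 ∧ IsConvexPolyomino (π.erase Γ) := by
  classical
  obtain ⟨a0, ha0, ha0x⟩ := hmem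
  set S : Finset ℤ := (π.filter (fun a => a.1 = x0)).image Prod.snd with hS
  have hSne : S.Nonempty :=
    ⟨a0.2, Finset.mem_image.mpr ⟨a0, Finset.mem_filter.mpr ⟨ha0, ha0x⟩, rfl⟩⟩
  set t := S.max' hSne with ht
  set s := S.min' hSne with hs
  have hcolmem : ∀ y : ℤ, y ∈ S ↔ (x0, y) ∈ π := by
    intro y
    constructor
    · intro hy
      obtain ⟨a, haf, hay⟩ := Finset.mem_image.mp hy
      obtain ⟨haπ, hax⟩ := Finset.mem_filter.mp haf
      exact (pext hax hay : a = (x0, y)) ▸ haπ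
    · intro h
      exact Finset.mem_image.mpr ⟨(x0, y), Finset.mem_filter.mpr ⟨h, rfl⟩, rfl⟩
  have hT : (x0, t) ∈ π := (hcolmem t).1 (S.max'_mem hSne)
  have hBm : (x0, s) ∈ π := (hcolmem s).1 (S.min'_mem hSne)
  have hTtop : ∀ a ∈ π, a.1 = x0 → a.2 ≤ t := by
    intro a ha hax
    exact S.le_max' a.2 ((hcolmem a.2).2 ((pext hax rfl : a = (x0, a.2)) ▸ ha))
  have hBbot : ∀ a ∈ π, a.1 = x0 → s ≤ a.2 := by
    intro a ha hax
    exact S.min'_le a.2 ((hcolmem a.2).2 ((pext hax rfl : a = (x0, a.2)) ▸ ha))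
  have hb' : ∀ y : ℤ, ∃ c ∈ π, c ≠ (x0, y) := by
    obtain ⟨b, hbπ, hbx⟩ := hb
    exact fun y => ⟨b, hbπ, fun h => hbx (by rw [h])⟩
  by_cases hD : ((x0, t + (-1)) ∉ π ∨ (x0 + ε, t) ∉ π ∨ (x0 + ε, t + (-1)) ∈ π)
  · refine ⟨(x0, t), hT, rfl, ?_⟩
    exact erase_corner π hconv (x0, t) hT ε (-1) hε (Or.inr rfl)
      (fun a ha _ => hext a ha)
      (fun a ha hax => by have := hTtop a ha hax; omega)
      hD (hb' t)
  · push_neg at hD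
    obtain ⟨hD1, hD2, hD3⟩ := hD
    refine ⟨(x0, s), hBm, rfl, ?_⟩
    refine erase_corner π hconv (x0, s) hBm ε 1 hε (Or.inl rfl)
      (fun a ha _ => hext a ha)
      (fun a ha hax => by have := hBbot a ha hax; omega)
      ?_ (hb' s)
    by_contra h3
    push_neg at h3
    obtain ⟨_, hB, _⟩ := h3
    have hst : s ≤ t + (-1) := hBbot (x0, t + (-1)) hD1 rfl
    have := hconv.2.2 (x0 + ε, s) hB (x0 + ε, t) hD2 rfl (t + (-1)) (by omega)
      (by omega)
    exact hD3 this

lemma pick_row (π : Finset (ℤ × ℤ)) (hconv : IsConvexPolyomino π)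
    (δ : ℤ) (hδ : δ = 1 ∨ δ = -1) (y0 : ℤ)
    (hmem : ∃ a ∈ π, a.2 = y0)
    (hext : ∀ a ∈ π, 0 ≤ δ * (a.2 - y0))
    (hb : ∃ b ∈ π, b.2 ≠ y0) :
    ∃ Γ ∈ π, Γ.2 = y0 ∧ IsConvexPolyomino (π.erase Γ) := by
  classical
  obtain ⟨a0, ha0, ha0y⟩ := hmem
  set S : Finset ℤ := (π.filter (fun a => a.2 = y0)).image Prod.fst with hS
  have hSne : S.Nonempty :=
    ⟨a0.1, Finset.mem_image.mpr ⟨a0, Finset.mem_filter.mpr ⟨ha0, ha0y⟩, rfl⟩⟩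
  set t := S.max' hSne with ht
  set s := S.min' hSne with hs
  have hrowmem : ∀ x : ℤ, x ∈ S ↔ (x, y0) ∈ π := by
    intro x
    constructor
    · intro hx
      obtain ⟨a, haf, hax⟩ := Finset.mem_image.mp hx
      obtain ⟨haπ, hay⟩ := Finset.mem_filter.mp haf
      exact (pext hax hay : a = (x, y0)) ▸ haπ
    · intro h
      exact Finset.mem_image.mpr ⟨(x, y0), Finset.mem_filter.mpr ⟨h, rfl⟩, rfl⟩
  have hT : (t, y0) ∈ π := (hrowmem t).1 (S.max'_mem hSne)
  have hBm : (s, y0) ∈ π := (hrowmem s).1 (S.min'_mem hSne)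
  have hTtop : ∀ a ∈ π, a.2 = y0 → a.1 ≤ t := by
    intro a ha hay
    exact S.le_max' a.1 ((hrowmem a.1).2 ((pext rfl hay : a = (a.1, y0)) ▸ ha))
  have hBbot : ∀ a ∈ π, a.2 = y0 → s ≤ a.1 := by
    intro a ha hay
    exact S.min'_le a.1 ((hrowmem a.1).2 ((pext rfl hay : a = (a.1, y0)) ▸ ha))
  have hb' : ∀ x : ℤ, ∃ c ∈ π, c ≠ (x, y0) := by
    obtain ⟨b, hbπ, hby⟩ := hb
    exact fun x => ⟨b, hbπ, fun h => hby (by rw [h])⟩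
  by_cases hD : ((t, y0 + δ) ∉ π ∨ (t + (-1), y0) ∉ π ∨ (t + (-1), y0 + δ) ∈ π)
  · refine ⟨(t, y0), hT, rfl, ?_⟩
    exact erase_corner π hconv (t, y0) hT (-1) δ (Or.inr rfl) hδ
      (fun a ha hay => by have := hTtop a ha hay; omega)
      (fun a ha _ => hext a ha)
      hD (hb' t)
  · push_neg at hD
    obtain ⟨hD1, hD2, hD3⟩ := hD
    refine ⟨(s, y0), hBm, rfl, ?_⟩
    refine erase_corner π hconv (s, y0) hBm 1 δ (Or.inl rfl) hδ
      (fun a ha hay => by have := hBbot a ha hay; omega)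
      (fun a ha _ => hext a ha)
      ?_ (hb' s)
    by_contra h3
    push_neg at h3
    obtain ⟨hA, _, _⟩ := h3
    have hst : s ≤ t + (-1) := hBbot (t + (-1), y0) hD2 rfl
    have := hconv.2.1 (s, y0 + δ) hA (t, y0 + δ) hD1 rfl (t + (-1)) (by omega)
      (by omega)
    exact hD3 this

/-- every non-basic convex polyomino has two non-neighbouring cells
whose individual removal keeps the polyomino convex, positioned extremally either
horizontally or vertically. -/
theorem nonbasic_convex_polyomino_two_cells
    (π : Finset (ℤ × ℤ)) (hconv : IsConvexPolyomino π) (hnb : NonBasic π) :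
    ∃ Γ₁ ∈ π, ∃ Γ₂ ∈ π,
      ¬ Neighbouring Γ₁ Γ₂ ∧
      IsConvexPolyomino (π.erase Γ₁) ∧
      IsConvexPolyomino (π.erase Γ₂) ∧
      ((|Γ₁.1 - Γ₂.1| ≥ |Γ₁.2 - Γ₂.2| ∧
          (∀ Γ ∈ π, Γ₁.1 ≤ Γ.1) ∧ (∀ Γ ∈ π, Γ.1 ≤ Γ₂.1)) ∨
       (|Γ₁.2 - Γ₂.2| ≥ |Γ₁.1 - Γ₂.1| ∧
          (∀ Γ ∈ π, Γ.2 ≤ Γ₁.2) ∧ (∀ Γ ∈ π, Γ₂.2 ≤ Γ.2))) := by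
  classical
  have hne : π.Nonempty := hconv.1.1
  have hXne : (π.image Prod.fst).Nonempty := hne.image _
  have hYne : (π.image Prod.snd).Nonempty := hne.image _
  set xmin := (π.image Prod.fst).min' hXne with hxmin
  set xmax := (π.image Prod.fst).max' hXne with hxmax
  set ymin := (π.image Prod.snd).min' hYne with hymin
  set ymax := (π.image Prod.snd).max' hYne with hymax
  have hxminle : ∀ a ∈ π, xmin ≤ a.1 :=
    fun a ha => Finset.min'_le _ a.1 (Finset.mem_image_of_mem _ ha)
  have hxmaxle : ∀ a ∈ π, a.1 ≤ xmax :=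
    fun a ha => Finset.le_max' _ a.1 (Finset.mem_image_of_mem _ ha)
  have hyminle : ∀ a ∈ π, ymin ≤ a.2 :=
    fun a ha => Finset.min'_le _ a.2 (Finset.mem_image_of_mem _ ha)
  have hymaxle : ∀ a ∈ π, a.2 ≤ ymax :=
    fun a ha => Finset.le_max' _ a.2 (Finset.mem_image_of_mem _ ha)
  have hxmin_mem : ∃ a ∈ π, a.1 = xmin := by
    obtain ⟨a, ha, hax⟩ := Finset.mem_image.mp ((π.image Prod.fst).min'_mem hXne)
    exact ⟨a, ha, hax⟩
  have hxmax_mem : ∃ a ∈ π, a.1 = xmax := by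
    obtain ⟨a, ha, hax⟩ := Finset.mem_image.mp ((π.image Prod.fst).max'_mem hXne)
    exact ⟨a, ha, hax⟩
  have hymin_mem : ∃ a ∈ π, a.2 = ymin := by
    obtain ⟨a, ha, hay⟩ := Finset.mem_image.mp ((π.image Prod.snd).min'_mem hYne)
    exact ⟨a, ha, hay⟩
  have hymax_mem : ∃ a ∈ π, a.2 = ymax := by
    obtain ⟨a, ha, hay⟩ := Finset.mem_image.mp ((π.image Prod.snd).max'_mem hYne)
    exact ⟨a, ha, hay⟩
  have hbig : 2 ≤ xmax - xmin ∨ 2 ≤ ymax - ymin := by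
    obtain ⟨a, ha, b, hb, hab⟩ := hnb
    simp only [Neighbouring, max_le_iff, not_and_or, not_le] at hab
    have h1 := hxminle a ha
    have h2 := hxmaxle a ha
    have h3 := hxminle b hb
    have h4 := hxmaxle b hb
    have h5 := hyminle a ha
    have h6 := hymaxle a ha
    have h7 := hyminle b hb
    have h8 := hymaxle b hb
    rcases abs_cases (a.1 - b.1) with ⟨e1, _⟩ | ⟨e1, _⟩ <;>
    rcases abs_cases (a.2 - b.2) with ⟨e2, _⟩ | ⟨e2, _⟩ <;> omega
  by_cases hwh : ymax - ymin ≤ xmax - xmin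
  · have hw2 : 2 ≤ xmax - xmin := by omega
    obtain ⟨Γ₁, hΓ₁π, hΓ₁x, hΓ₁c⟩ := pick_col π hconv 1 (Or.inl rfl) xmin hxmin_mem
      (fun a ha => by have := hxminle a ha; omega)
      (by obtain ⟨a, ha, hax⟩ := hxmax_mem; exact ⟨a, ha, by omega⟩)
    obtain ⟨Γ₂, hΓ₂π, hΓ₂x, hΓ₂c⟩ := pick_col π hconv (-1) (Or.inr rfl) xmax hxmax_mem
      (fun a ha => by have := hxmaxle a ha; omega)
      (by obtain ⟨a, ha, hax⟩ := hxmin_mem; exact ⟨a, ha, by omega⟩)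
    have hy1 := hyminle Γ₁ hΓ₁π
    have hy2 := hymaxle Γ₁ hΓ₁π
    have hy3 := hyminle Γ₂ hΓ₂π
    have hy4 := hymaxle Γ₂ hΓ₂π
    refine ⟨Γ₁, hΓ₁π, Γ₂, hΓ₂π, ?_, hΓ₁c, hΓ₂c, Or.inl ⟨?_, ?_, ?_⟩⟩
    · intro h
      have := le_of_max_le_left h
      rcases abs_cases (Γ₁.1 - Γ₂.1) with ⟨e1, _⟩ | ⟨e1, _⟩ <;> omega
    · rcases abs_cases (Γ₁.1 - Γ₂.1) with ⟨e1, _⟩ | ⟨e1, _⟩ <;>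
      rcases abs_cases (Γ₁.2 - Γ₂.2) with ⟨e2, _⟩ | ⟨e2, _⟩ <;> omega
    · intro Γ hΓ
      have := hxminle Γ hΓ
      omega
    · intro Γ hΓ
      have := hxmaxle Γ hΓ
      omega
  · have hh2 : 2 ≤ ymax - ymin := by omega
    obtain ⟨Γ₁, hΓ₁π, hΓ₁y, hΓ₁c⟩ := pick_row π hconv (-1) (Or.inr rfl) ymax hymax_mem
      (fun a ha => by have := hymaxle a ha; omega)
      (by obtain ⟨a, ha, hay⟩ := hymin_mem; exact ⟨a, ha, by omega⟩)
    obtain ⟨Γ₂, hΓ₂π, hΓ₂y, hΓ₂c⟩ := pick_row π hconv 1 (Or.inl rfl) ymin hymin_mem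
      (fun a ha => by have := hyminle a ha; omega)
      (by obtain ⟨a, ha, hay⟩ := hymax_mem; exact ⟨a, ha, by omega⟩)
    have hx1 := hxminle Γ₁ hΓ₁π
    have hx2 := hxmaxle Γ₁ hΓ₁π
    have hx3 := hxminle Γ₂ hΓ₂π
    have hx4 := hxmaxle Γ₂ hΓ₂π
    refine ⟨Γ₁, hΓ₁π, Γ₂, hΓ₂π, ?_, hΓ₁c, hΓ₂c, Or.inr ⟨?_, ?_, ?_⟩⟩
    · intro h
      have := le_of_max_le_right h
      rcases abs_cases (Γ₁.2 - Γ₂.2) with ⟨e1, _⟩ | ⟨e1, _⟩ <;> omega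
    · rcases abs_cases (Γ₁.1 - Γ₂.1) with ⟨e1, _⟩ | ⟨e1, _⟩ <;>
      rcases abs_cases (Γ₁.2 - Γ₂.2) with ⟨e2, _⟩ | ⟨e2, _⟩ <;> omega
    · intro Γ hΓ
      have := hymaxle Γ hΓ
      omega
    · intro Γ hΓ
      have := hyminle Γ hΓ
      omega
end
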